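/- Let K be a field, n a natural number, L a Lie algebra over K with basis b : Basis (Fin n) K L and structure constants c i j k = (b.repr ⁅b i, b j⁆) k. Let A = MvPolynomial (Fin n) K. If P' is any K-bilinear bracket on A that is a derivation in each argument and satisfies P'(X i, X j) = Σ_{k} C (c i j k) * X k for all i, j, then P' equals the structure-constant bracket {f, g} = Σ_{i} Σ_{j} (Σ_{k} C (c i j k) * X k) * (pderiv i f) * (pderiv j g). In particular, there is a unique K-bilinear bracket on A that is a derivation in each argument and restricts on the linear generators to the Lie bracket of L. -/

import Mathlib

/-! A derivation of `R[X_i]` is determined by its values on the variables, via the chain rule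
`D f = ∑ i, ∂f/∂X_i • D X_i`. Applying this in each argument of a bracket that is a derivation in
both arguments expresses `{f, g}` through the brackets `{X_i, X_j}` and the partial derivatives of
`f` and `g`; prescribing `{X_i, X_j}` by the structure constants therefore pins the bracket down. -/

open MvPolynomial

namespace MvPolynomial

variable {σ : Type*} [Fintype σ]

theorem derivation_eq_sum_pderiv_smul {R : Type*} [CommSemiring R] {A : Type*} [AddCommMonoid A] [Module R A]
    [Module (MvPolynomial σ R) A] (D : Derivation R (MvPolynomial σ R) A)
    (f : MvPolynomial σ R) : D f = ∑ i, pderiv i f • D (X i) := by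
  classical
  induction f using MvPolynomial.induction_on with
  | C a => simp
  | add p q hp hq => simp only [map_add, hp, hq, add_smul, Finset.sum_add_distrib]
  | mul_X p j hp =>
    simp [Derivation.leibniz, hp, add_smul, Finset.sum_add_distrib, mul_smul, Finset.smul_sum,
      pderiv_X, Pi.single_apply]

theorem biderivation_eq_sum_pderiv_mul_pderiv {R : Type*} [CommRing R]
    (P : MvPolynomial σ R →ₗ[R] MvPolynomial σ R →ₗ[R] MvPolynomial σ R)
    (hright : ∀ f g h, P f (g * h) = P f g * h + g * P f h)
    (hleft : ∀ f g h, P (f * g) h = P f h * g + f * P g h) (f g : MvPolynomial σ R) :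
    P f g = ∑ i, ∑ j, P (X i) (X j) * pderiv i f * pderiv j g := by
  let rightDer (f) : Derivation R (MvPolynomial σ R) (MvPolynomial σ R) :=
    Derivation.mk' (P f) fun g h => by rw [hright, smul_eq_mul, smul_eq_mul]; ring
  let leftDer (h) : Derivation R (MvPolynomial σ R) (MvPolynomial σ R) :=
    Derivation.mk' (P.flip h) fun f g => by
      simp only [LinearMap.flip_apply, hleft, smul_eq_mul]; ring
  calc P f g = ∑ j, pderiv j g * P f (X j) := derivation_eq_sum_pderiv_smul (rightDer f) g
    _ = ∑ j, pderiv j g * ∑ i, pderiv i f * P (X i) (X j) := by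
      congr! 2 with j
      exact derivation_eq_sum_pderiv_smul (leftDer (X j)) f
    _ = ∑ i, ∑ j, P (X i) (X j) * pderiv i f * pderiv j g := by
      simp_rw [Finset.mul_sum]
      rw [Finset.sum_comm]
      exact Fintype.sum_congr _ _ fun i => Fintype.sum_congr _ _ fun j => by ring

end MvPolynomial

theorem kostant_souriau_bracket_unique_general
    {K : Type*} [Field K] {n : ℕ}
    (c : Fin n → Fin n → Fin n → K)
    (P' : MvPolynomial (Fin n) K →ₗ[K] MvPolynomial (Fin n) K →ₗ[K] MvPolynomial (Fin n) K)
    (hleib_right : ∀ f g h : MvPolynomial (Fin n) K,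
        P' f (g * h) = P' f g * h + g * P' f h)
    (hleib_left : ∀ f g h : MvPolynomial (Fin n) K,
        P' (f * g) h = P' f h * g + f * P' g h)
    (hgen : ∀ i j : Fin n, P' (X i) (X j) = ∑ k : Fin n, C (c i j k) * X k) :
    ∀ f g : MvPolynomial (Fin n) K,
      P' f g = ∑ i : Fin n, ∑ j : Fin n,
        (∑ k : Fin n, C (c i j k) * X k) * (pderiv i f) * (pderiv j g) := by
  intro f g
  simp only [biderivation_eq_sum_pderiv_mul_pderiv P' hleib_right hleib_left f g, hgen]

/-- Any K-bilinear bracket on the polynomial ring which is a derivation in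
each argument and restricts on the linear generators to the Lie bracket (via the structure
constants) equals the Kostant–Souriau structure-constant bracket; in particular such a
bracket is unique. -/
theorem kostant_souriau_bracket_unique
    {K : Type*} [Field K] {n : ℕ} {L : Type*} [LieRing L] [LieAlgebra K L]
    (b : Module.Basis (Fin n) K L)
    (c : Fin n → Fin n → Fin n → K)
    (hc : ∀ i j k : Fin n, c i j k = (b.repr ⁅b i, b j⁆) k)
    (P' : MvPolynomial (Fin n) K →ₗ[K] MvPolynomial (Fin n) K →ₗ[K] MvPolynomial (Fin n) K)
    (hleib_right : ∀ f g h : MvPolynomial (Fin n) K,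
        P' f (g * h) = P' f g * h + g * P' f h)
    (hleib_left : ∀ f g h : MvPolynomial (Fin n) K,
        P' (f * g) h = P' f h * g + f * P' g h)
    (hgen : ∀ i j : Fin n, P' (X i) (X j) = ∑ k : Fin n, C (c i j k) * X k) :
    ∀ f g : MvPolynomial (Fin n) K,
      P' f g = ∑ i : Fin n, ∑ j : Fin n,
        (∑ k : Fin n, C (c i j k) * X k) * (pderiv i f) * (pderiv j g) :=
  kostant_souriau_bracket_unique_general c P' hleib_right hleib_left hgen
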